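/- arXiv:1512.06372 — 4 statements merged into one kernel-verified Lean document; each statement's English description precedes it below -/
import Mathlib

section
/- Let G=(V,E) be a finite undirected graph with threshold function t:V→ℕ satisfying 1 ≤ t(v) ≤ d(v) for every vertex v (where d(v) is the degree of v). Then there exists a target vector s for G whose cost satisfies C(s) = Σ_{v∈V} s(v) ≤ Σ_{v∈V} t(v)·(t(v)+1)/(2·(d(v)+1)). -/
/-- `activeVec G t s ℓ` : the set of vertices active at round `ℓ` of the activation
process in `G` with thresholds `t`, starting with partial incentives `s`. -/
def activeVec {V : Type*} [Fintype V] [DecidableEq V] (G : SimpleGraph V) [DecidableRel G.Adj]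
    (t s : V → ℕ) : ℕ → Finset V
  | 0 => Finset.univ.filter fun v => t v ≤ s v
  | ℓ + 1 =>
    activeVec G t s ℓ ∪
      Finset.univ.filter fun u => t u - s u ≤ (G.neighborFinset u ∩ activeVec G t s ℓ).card

/-- `s` is a target vector for `G` (with thresholds `t`) if the activation process
starting with incentives `s` eventually activates the whole vertex set. -/
def isTargetVec {V : Type*} [Fintype V] [DecidableEq V] (G : SimpleGraph V) [DecidableRel G.Adj]
    (t s : V → ℕ) : Prop :=
  ∃ ℓ, activeVec G t s ℓ = Finset.univ

/-!
Order the vertices uniformly at random and give each vertex `v` the incentive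
`(t v - k)₊`, where `k` is the number of neighbours of `v` that come after it; activating the
vertices in reverse order then succeeds. Since `k` is uniform on `{0, …, d v}`, the expected cost
is `∑ v, 𝔼 (t v - k)₊ = ∑ v, t v (t v + 1) / (2 (d v + 1))` when `t v ≤ d v`. The expectation is
derandomized greedily: for a vertex set `A`, the expected cost `expectedCost A` on `G[A]` is
the average over `u ∈ A` of the cost `(t u - deg_A u)₊` of placing `u` first plus
`expectedCost (A \ {u})`, so some `u` does no worse than average.
-/

open Finset

/-- `meanTrunc a d` is the expectation of `(a - X)₊` for `X` uniform on `{0, …, d}`. -/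
def meanTrunc (a d : ℕ) : ℚ :=
  (∑ x ∈ range (d + 1), ((a - x : ℕ) : ℚ)) / (d + 1)

lemma sum_range_tsub_of_le {a d : ℕ} (h : a ≤ d) :
    ∑ x ∈ range (d + 1), (a - x) = ∑ x ∈ range (a + 1), x := by
  induction d, h using Nat.le_induction with
  | base => simpa using sum_range_reflect (fun x => x) (a + 1)
  | succ d _ ih => rw [sum_range_succ, ih, Nat.sub_eq_zero_of_le (by omega), add_zero]

lemma meanTrunc_of_le {a d : ℕ} (h : a ≤ d) :
    meanTrunc a d = a * (a + 1) / (2 * (d + 1)) := by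
  have gauss : ((∑ x ∈ range (a + 1), x : ℕ) : ℚ) * 2 = (a + 1) * a := by
    exact_mod_cast sum_range_id_mul_two (a + 1)
  rw [meanTrunc, ← Nat.cast_sum, sum_range_tsub_of_le h]
  field_simp
  linear_combination gauss

lemma tsub_add_mul_meanTrunc_pred (a d : ℕ) :
    ((a - d : ℕ) : ℚ) + d * meanTrunc a (d - 1) = (d + 1) * meanTrunc a d := by
  rcases d with _ | d
  · simp [meanTrunc]
  · simp only [meanTrunc, Nat.add_sub_cancel, sum_range_succ (n := d + 1), Nat.cast_add,
      Nat.cast_one]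
    field_simp
    ring

section

variable {V : Type*} [Fintype V] [DecidableEq V] (G : SimpleGraph V) [DecidableRel G.Adj]
  (t : V → ℕ)

lemma activeVec_subset_succ (s : V → ℕ) (ℓ : ℕ) :
    activeVec G t s ℓ ⊆ activeVec G t s (ℓ + 1) :=
  subset_union_left

lemma activeVec_mono {s s' : V → ℕ} (hs : s ≤ s') (ℓ : ℕ) :
    activeVec G t s ℓ ⊆ activeVec G t s' ℓ := by
  induction ℓ with
  | zero =>
    intro v hv
    simp only [activeVec, mem_filter, mem_univ, true_and] at hv ⊢
    exact hv.trans (hs v)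
  | succ ℓ ih =>
    refine union_subset_union ih fun u hu => ?_
    simp only [mem_filter, mem_univ, true_and] at hu ⊢
    calc t u - s' u ≤ t u - s u := Nat.sub_le_sub_left (hs u) _
      _ ≤ #(G.neighborFinset u ∩ activeVec G t s ℓ) := hu
      _ ≤ #(G.neighborFinset u ∩ activeVec G t s' ℓ) := card_le_card (inter_subset_inter le_rfl ih)

lemma insert_subset_activeVec_succ {s : V → ℕ} {ℓ : ℕ} {A : Finset V} {u : V}
    (hA : A ⊆ activeVec G t s ℓ) (hu : t u - s u ≤ #(G.neighborFinset u ∩ A)) :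
    insert u A ⊆ activeVec G t s (ℓ + 1) := by
  refine insert_subset ?_ (hA.trans (activeVec_subset_succ G t s ℓ))
  refine mem_union_right _ (mem_filter.2 ⟨mem_univ u, hu.trans ?_⟩)
  exact card_le_card (inter_subset_inter le_rfl hA)

def degreeIn (A : Finset V) (v : V) : ℕ := #(G.neighborFinset v ∩ A)

lemma degreeIn_erase_self (A : Finset V) (v : V) : degreeIn G (A.erase v) v = degreeIn G A v := by
  rw [degreeIn, inter_erase, erase_eq_of_notMem (fun h => G.notMem_neighborFinset_self v
    (mem_inter.1 h).1), degreeIn]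

lemma degreeIn_univ (v : V) : degreeIn G univ v = G.degree v := by
  rw [degreeIn, inter_univ, G.card_neighborFinset_eq_degree]

/-- The expected cost of the random-order incentives on the induced subgraph `G[A]`. -/
def expectedCost (A : Finset V) : ℚ := ∑ v ∈ A, meanTrunc (t v) (degreeIn G A v)

/-- Removing a neighbour of `v` lowers `degreeIn · v` by one, removing any other vertex keeps it. -/
lemma tsub_degreeIn_add_sum_erase {A : Finset V} {v : V} (hv : v ∈ A) :
    ((t v - degreeIn G A v : ℕ) : ℚ) + ∑ u ∈ A.erase v, meanTrunc (t v) (degreeIn G (A.erase u) v)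
      = #A * meanTrunc (t v) (degreeIn G A v) := by
  set N := G.neighborFinset v ∩ A
  set d := degreeIn G A v
  have hN : N ⊆ A.erase v := fun u hu =>
    mem_erase.2 ⟨fun h => G.notMem_neighborFinset_self v (h ▸ (mem_inter.1 hu).1),
      (mem_inter.1 hu).2⟩
  have on_N : ∀ u ∈ N, meanTrunc (t v) (degreeIn G (A.erase u) v) = meanTrunc (t v) (d - 1) :=
    fun u hu => by rw [degreeIn, inter_erase, card_erase_of_mem hu]; rfl
  have off_N : ∀ u ∈ A.erase v \ N,
      meanTrunc (t v) (degreeIn G (A.erase u) v) = meanTrunc (t v) d :=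
    fun u hu => by rw [degreeIn, inter_erase, erase_eq_of_notMem (mem_sdiff.1 hu).2]; rfl
  have hcard : ((#(A.erase v \ N) : ℕ) : ℚ) + d + 1 = #A := by
    exact_mod_cast (card_sdiff_add_card_eq_card hN).symm ▸ card_erase_add_one hv
  rw [← sum_sdiff hN, sum_congr rfl on_N, sum_congr rfl off_N, sum_const, sum_const,
    nsmul_eq_mul, nsmul_eq_mul]
  have hNd : ((#N : ℕ) : ℚ) = d := rfl
  linear_combination tsub_add_mul_meanTrunc_pred (t v) d
    + meanTrunc (t v) d * hcard + meanTrunc (t v) (d - 1) * hNd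

lemma sum_tsub_degreeIn_add_expectedCost_erase (A : Finset V) :
    ∑ u ∈ A, (((t u - degreeIn G A u : ℕ) : ℚ) + expectedCost G t (A.erase u))
      = #A * expectedCost G t A := by
  have swap : ∑ u ∈ A, expectedCost G t (A.erase u)
      = ∑ v ∈ A, ∑ u ∈ A.erase v, meanTrunc (t v) (degreeIn G (A.erase u) v) :=
    sum_comm' fun u v => by simp only [mem_erase]; tauto
  rw [sum_add_distrib, swap, ← sum_add_distrib, expectedCost, mul_sum]
  exact sum_congr rfl fun v hv => tsub_degreeIn_add_sum_erase G t hv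

lemma exists_tsub_degreeIn_add_expectedCost_erase_le {A : Finset V} (hA : A.Nonempty) :
    ∃ u ∈ A, ((t u - degreeIn G A u : ℕ) : ℚ) + expectedCost G t (A.erase u)
      ≤ expectedCost G t A := by
  refine exists_le_of_sum_le hA ?_
  rw [sum_tsub_degreeIn_add_expectedCost_erase, sum_const, nsmul_eq_mul]

/-- The vertex `u` chosen first is activated last, after all of `A \ {u}`, so its incentive
`(t u - deg_A u)₊` suffices. -/
lemma exists_incentive_activating_le_expectedCost (A : Finset V) :
    ∃ s : V → ℕ, (∃ ℓ, A ⊆ activeVec G t s ℓ) ∧ ∑ v, (s v : ℚ) ≤ expectedCost G t A := by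
  induction A using Finset.strongInduction with
  | H A ih =>
    rcases A.eq_empty_or_nonempty with rfl | hA
    · exact ⟨0, ⟨0, empty_subset _⟩, by simp [expectedCost]⟩
    obtain ⟨u, hu, hle⟩ := exists_tsub_degreeIn_add_expectedCost_erase_le G t hA
    obtain ⟨s, ⟨ℓ, hact⟩, hcost⟩ := ih (A.erase u) (erase_ssubset hu)
    let c := t u - degreeIn G A u
    have hmono : s ≤ s + Pi.single u c := fun v => Nat.le_add_right (s v) _
    refine ⟨s + Pi.single u c, ⟨ℓ + 1, ?_⟩, ?_⟩
    · rw [← insert_erase hu]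
      refine insert_subset_activeVec_succ G t (hact.trans (activeVec_mono G t hmono ℓ)) ?_
      change _ ≤ degreeIn G (A.erase u) u
      simp only [Pi.add_apply, Pi.single_eq_same, degreeIn_erase_self]
      omega
    · simp only [Pi.add_apply, Nat.cast_add, sum_add_distrib]
      have hsingle : ∑ v, ((Pi.single u c : V → ℕ) v : ℚ) = c := by
        simp [Pi.single_apply]
      linarith

end

/-- There exists a target vector `s` with cost
`∑_{v∈V} s(v) ≤ ∑_{v∈V} t(v)(t(v)+1)/(2(d(v)+1))`. -/
theorem exists_target_vector_cost_le {V : Type*} [Fintype V] [DecidableEq V]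
    (G : SimpleGraph V) [DecidableRel G.Adj] (t : V → ℕ)
    (ht : ∀ v, 1 ≤ t v ∧ t v ≤ G.degree v) :
    ∃ s : V → ℕ, isTargetVec G t s ∧
      (∑ v : V, (s v : ℚ)) ≤
        ∑ v : V, (t v : ℚ) * ((t v : ℚ) + 1) / (2 * ((G.degree v : ℚ) + 1)) := by
  obtain ⟨s, ⟨ℓ, hact⟩, hcost⟩ := exists_incentive_activating_le_expectedCost G t univ
  refine ⟨s, ⟨ℓ, univ_subset_iff.1 hact⟩, hcost.trans_eq ?_⟩
  refine sum_congr rfl fun v _ => ?_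
  rw [degreeIn_univ, meanTrunc_of_le (ht v).2]
end

section
/- Let T=(V,E) be a finite tree with threshold function t:V→ℕ satisfying t(v) ≥ 1 for every vertex v. Then every target vector s for T satisfies Σ_{v∈V} s(v) ≥ Σ_{v∈V} t(v) − (|V| − 1); equivalently, since Σ_{v∈V} d(v) = 2(|V|−1), every target vector has cost at least |V| − 1 − Σ_{v∈V} (d(v) − t(v)). -/
section Aux

variable {V : Type*} [Fintype V] [DecidableEq V] (G : SimpleGraph V) [DecidableRel G.Adj]

/-- double counting of edges between two finsets -/
lemma double_count (A N : Finset V) :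
    ∑ v ∈ A, ((G.neighborFinset v ∩ N).card : ℤ) =
      ∑ u ∈ N, ((G.neighborFinset u ∩ A).card : ℤ) := by
  have h : ∀ (Y : Finset V) (v : V),
      ((G.neighborFinset v ∩ Y).card : ℤ) = ∑ u ∈ Y, if G.Adj v u then (1:ℤ) else 0 := by
    intro Y v
    have hset : G.neighborFinset v ∩ Y = Y.filter (fun u => G.Adj v u) := by
      ext u; simp [SimpleGraph.mem_neighborFinset, and_comm]
    rw [hset, Finset.card_filter]
    push_cast
    exact Finset.sum_congr rfl fun u _ => by split <;> simp
  simp only [h]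
  rw [Finset.sum_comm]
  exact Finset.sum_congr rfl fun u _ => Finset.sum_congr rfl fun v _ => by simp [G.adj_comm]

lemma invariant (t s : V → ℕ) (ℓ : ℕ) :
    2 * ∑ v ∈ activeVec G t s ℓ, ((t v : ℤ) - s v) ≤
      ∑ v ∈ activeVec G t s ℓ, ((G.neighborFinset v ∩ activeVec G t s ℓ).card : ℤ) := by
  induction ℓ with
  | zero =>
    have h1 : ∑ v ∈ activeVec G t s 0, ((t v : ℤ) - s v) ≤ 0 := by
      apply Finset.sum_nonpos
      intro v hv
      simp only [activeVec, Finset.mem_filter] at hv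
      have := hv.2
      push_cast
      omega
    have h2 : (0:ℤ) ≤ ∑ v ∈ activeVec G t s 0,
        ((G.neighborFinset v ∩ activeVec G t s 0).card : ℤ) :=
      Finset.sum_nonneg fun v _ => Int.natCast_nonneg _
    linarith
  | succ ℓ ih =>
    set A := activeVec G t s ℓ with hA
    set A' := activeVec G t s (ℓ+1) with hA'
    set N := A' \ A with hN
    have hsub : A ⊆ A' := by
      rw [hA']
      show A ⊆ A ∪ _
      exact Finset.subset_union_left
    have hunion : A' = A ∪ N := (Finset.union_sdiff_of_subset hsub).symm
    have hdisj : Disjoint A N := Finset.disjoint_sdiff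
    -- each new vertex has enough active neighbors
    have hnew : ∀ u ∈ N, ((t u : ℤ) - s u) ≤ ((G.neighborFinset u ∩ A).card : ℤ) := by
      intro u hu
      rw [hN, Finset.mem_sdiff] at hu
      have hu1 : u ∈ A' := hu.1
      rw [hA'] at hu1
      have : activeVec G t s (ℓ+1)
          = A ∪ Finset.univ.filter
              (fun u => t u - s u ≤ (G.neighborFinset u ∩ A).card) := rfl
      rw [this, Finset.mem_union] at hu1
      rcases hu1 with h | h
      · exact absurd h hu.2
      · simp only [Finset.mem_filter] at h
        have := h.2
        push_cast
        omega
    -- split sums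
    have hsplit : ∀ f : V → ℤ, ∑ v ∈ A', f v = ∑ v ∈ A, f v + ∑ v ∈ N, f v := by
      intro f
      rw [hunion, Finset.sum_union hdisj]
    -- neighbor sets split
    have hcardsplit : ∀ v : V,
        ((G.neighborFinset v ∩ A').card : ℤ)
          = (G.neighborFinset v ∩ A).card + (G.neighborFinset v ∩ N).card := by
      intro v
      rw [hunion, Finset.inter_union_distrib_left]
      push_cast [Finset.card_union_of_disjoint
        (Finset.disjoint_of_subset_left Finset.inter_subset_right
          (Finset.disjoint_of_subset_right Finset.inter_subset_right hdisj))]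
      ring
    have hLHS : ∑ v ∈ A', ((t v : ℤ) - s v)
        = ∑ v ∈ A, ((t v : ℤ) - s v) + ∑ v ∈ N, ((t v : ℤ) - s v) := hsplit _
    have hNsum : ∑ v ∈ N, ((t v : ℤ) - s v) ≤ ∑ u ∈ N, ((G.neighborFinset u ∩ A).card : ℤ) :=
      Finset.sum_le_sum hnew
    have hdc := double_count G A N
    have hRHS : ∑ v ∈ A', ((G.neighborFinset v ∩ A').card : ℤ)
        ≥ ∑ v ∈ A, ((G.neighborFinset v ∩ A).card : ℤ)
          + 2 * ∑ u ∈ N, ((G.neighborFinset u ∩ A).card : ℤ) := by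
      rw [hsplit]
      simp only [hcardsplit]
      rw [Finset.sum_add_distrib, Finset.sum_add_distrib, hdc]
      have h1 : (0:ℤ) ≤ ∑ v ∈ N, ((G.neighborFinset v ∩ N).card : ℤ) :=
        Finset.sum_nonneg fun v _ => Int.natCast_nonneg _
      linarith
    rw [hLHS]
    linarith

end Aux

/-- On a tree, every target vector `s` satisfies
`∑ s(v) ≥ ∑ t(v) − (|V|−1)`, equivalently `∑ s(v) ≥ |V| − 1 − ∑ (d(v) − t(v))`. -/
theorem tree_target_vector_cost_lower_bound {V : Type*} [Fintype V] [DecidableEq V]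
    (T : SimpleGraph V) [DecidableRel T.Adj] (hT : T.IsTree)
    (t : V → ℕ) (ht : ∀ v, 1 ≤ t v) (s : V → ℕ) (hs : isTargetVec T t s) :
    (∑ v : V, (s v : ℤ)) ≥ (∑ v : V, (t v : ℤ)) - ((Fintype.card V : ℤ) - 1) ∧
    (∑ v : V, (s v : ℤ)) ≥
      (Fintype.card V : ℤ) - 1 - ∑ v : V, ((T.degree v : ℤ) - (t v : ℤ)) := by
  obtain ⟨ℓ, hℓ⟩ := hs
  have hinv := invariant T t s ℓ
  rw [hℓ] at hinv
  have hdeg : ∀ v : V, (T.neighborFinset v ∩ Finset.univ) = T.neighborFinset v := by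
    intro v; simp
  simp only [hdeg] at hinv
  have hsumdeg : ∑ v : V, (T.degree v : ℤ) = 2 * ((Fintype.card V : ℤ) - 1) := by
    have h1 := T.sum_degrees_eq_twice_card_edges
    have h2 := hT.card_edgeFinset
    have : ∑ v : V, (T.degree v : ℤ) = ((∑ v : V, T.degree v : ℕ) : ℤ) := by push_cast; rfl
    rw [this, h1]
    push_cast
    omega
  have hcard : ∀ v : V, ((T.neighborFinset v).card : ℤ) = (T.degree v : ℤ) := by
    intro v; rw [T.card_neighborFinset_eq_degree]
  simp only [hcard] at hinv
  rw [hsumdeg] at hinv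
  have key : (∑ v : V, (t v : ℤ)) - ∑ v : V, (s v : ℤ) ≤ (Fintype.card V : ℤ) - 1 := by
    rw [Finset.sum_sub_distrib] at hinv
    linarith
  constructor
  · linarith
  · have : ∑ v : V, ((T.degree v : ℤ) - (t v : ℤ))
        = 2 * ((Fintype.card V : ℤ) - 1) - ∑ v : V, (t v : ℤ) := by
      rw [Finset.sum_sub_distrib, hsumdeg]
    rw [this]
    linarith
end

section
/- Let T=(V,E) be a finite tree with threshold function t:V→ℕ satisfying t(v) ≥ 1 for every vertex v. Then there exists a target vector s for T with cost exactly Σ_{v∈V} s(v) = Σ_{v∈V} t(v) − (|V| − 1). Consequently, any optimal (minimum-cost) target vector s* for T has cost C(s*) = Σ_{v∈V} t(v) − (|V| − 1) = |V| − 1 − Σ_{v∈V} (d(v) − t(v)). -/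
open Finset

namespace SimpleGraph

variable {V : Type*} [Fintype V] {G : SimpleGraph V} [DecidableRel G.Adj]

lemma sum_card_filter_lt_le_card_edgeFinset {α : Type*} [Preorder α] [DecidableLT α]
    (f : V → α) :
    ∑ v, #{u ∈ G.neighborFinset v | f u < f v} ≤ #G.edgeFinset := by
  rw [← card_sigma]
  refine card_le_card_of_injOn (fun x => s(x.1, x.2)) ?_ ?_
  · rintro ⟨v, u⟩ hvu
    simp only [coe_sigma, Set.mem_sigma_iff, coe_filter, Set.mem_ofPred_eq,
      mem_neighborFinset] at hvu
    simpa using hvu.2.1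
  · rintro ⟨v, u⟩ hvu ⟨v', u'⟩ hvu' heq
    simp only [coe_sigma, Set.mem_sigma_iff, coe_filter] at hvu hvu'
    rcases Sym2.eq_iff.mp heq with ⟨rfl, rfl⟩ | ⟨rfl, rfl⟩
    · rfl
    · exact absurd hvu.2.2 (lt_asymm hvu'.2.2)

end SimpleGraph

section Activation

variable {V : Type*} [Fintype V] [DecidableEq V] {G : SimpleGraph V} [DecidableRel G.Adj]
  {t s : V → ℕ}

@[simp]
lemma mem_activeVec_zero {v : V} : v ∈ activeVec G t s 0 ↔ t v ≤ s v := by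
  simp [activeVec]

lemma mem_activeVec_succ {v : V} {ℓ : ℕ} :
    v ∈ activeVec G t s (ℓ + 1) ↔
      v ∈ activeVec G t s ℓ ∨
        t v - s v ≤ #(G.neighborFinset v ∩ activeVec G t s ℓ) := by
  simp [activeVec]

lemma activeVec_mono_s3 : Monotone (activeVec G t s) :=
  monotone_nat_of_le_succ fun _ _ hv => mem_activeVec_succ.mpr (Or.inl hv)

lemma isTargetVec.exists_mem_activeVec (hs : isTargetVec G t s) (v : V) :
    ∃ ℓ, v ∈ activeVec G t s ℓ :=
  let ⟨ℓ, hℓ⟩ := hs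
  ⟨ℓ, hℓ ▸ mem_univ v⟩

def isTargetVec.activationRound (hs : isTargetVec G t s) (v : V) : ℕ :=
  Nat.find (hs.exists_mem_activeVec v)

lemma isTargetVec.le_add_card_activated_before (hs : isTargetVec G t s) (v : V) :
    t v ≤ s v + #{u ∈ G.neighborFinset v | hs.activationRound u < hs.activationRound v} := by
  have hv : v ∈ activeVec G t s (hs.activationRound v) :=
    Nat.find_spec (hs.exists_mem_activeVec v)
  cases hround : hs.activationRound v with
  | zero =>
    rw [hround, mem_activeVec_zero] at hv
    omega
  | succ ℓ =>
    have hnot : v ∉ activeVec G t s ℓ :=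
      Nat.find_min (hs.exists_mem_activeVec v)
        (show ℓ < hs.activationRound v by omega)
    rw [hround, mem_activeVec_succ, or_iff_right hnot] at hv
    have hsub : G.neighborFinset v ∩ activeVec G t s ℓ ⊆
        {u ∈ G.neighborFinset v | hs.activationRound u < ℓ + 1} := by
      intro u hu
      rw [mem_inter] at hu
      exact mem_filter.mpr ⟨hu.1, Nat.lt_succ_of_le (Nat.find_min' _ hu.2)⟩
    have := card_le_card hsub
    omega

theorem isTargetVec.sum_le_sum_add_card_edgeFinset (hs : isTargetVec G t s) :
    ∑ v, t v ≤ ∑ v, s v + #G.edgeFinset :=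
  (sum_le_sum fun v _ => hs.le_add_card_activated_before v).trans <| by
    rw [sum_add_distrib]
    exact Nat.add_le_add_left (G.sum_card_filter_lt_le_card_edgeFinset hs.activationRound) _

def rootedIncentive (t : V → ℕ) (r : V) : V → ℕ := fun v => if v = r then t v else t v - 1

lemma mem_activeVec_rootedIncentive_of_walk {r v : V} (p : G.Walk v r) :
    v ∈ activeVec G t (rootedIncentive t r) p.length := by
  induction p with
  | nil => simp [rootedIncentive]
  | @cons v w r hadj p ih =>
    by_cases hvr : v = r
    · exact activeVec_mono_s3 (Nat.zero_le _) (by simp [rootedIncentive, hvr])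
    · have hw : w ∈ G.neighborFinset v ∩ activeVec G t (rootedIncentive t r) p.length :=
        mem_inter.mpr ⟨(G.mem_neighborFinset v w).mpr hadj, ih⟩
      have := card_pos.mpr ⟨w, hw⟩
      refine mem_activeVec_succ.mpr (Or.inr ?_)
      simp only [rootedIncentive, hvr, if_false]
      omega

lemma isTargetVec_rootedIncentive (hG : G.Connected) (t : V → ℕ) (r : V) :
    isTargetVec G t (rootedIncentive t r) := by
  refine ⟨Fintype.card V, eq_univ_of_forall fun v => ?_⟩
  obtain ⟨p, hp⟩ := (hG.preconnected v r).exists_isPath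
  exact activeVec_mono_s3 hp.length_lt.le (mem_activeVec_rootedIncentive_of_walk p)

lemma sum_rootedIncentive (ht : ∀ v, 1 ≤ t v) (r : V) :
    ∑ v, (rootedIncentive t r v : ℤ) = ∑ v, (t v : ℤ) - (Fintype.card V - 1) := by
  have hcast (v : V) : (rootedIncentive t r v : ℤ) = t v - 1 + if v = r then 1 else 0 := by
    unfold rootedIncentive
    split_ifs
    · ring
    · rw [Nat.cast_sub (ht v)]
      ring
  simp only [hcast, sum_add_distrib, sum_sub_distrib, sum_ite_eq', mem_univ, if_true,
    sum_const, card_univ, nsmul_eq_mul, mul_one]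
  ring

end Activation

/-- On a tree there is a target vector of cost exactly `∑ t(v) − (|V|−1)`, and this is
the minimum cost of a target vector (hence every optimal target vector has this cost);
moreover this value equals `|V| − 1 − ∑ (d(v) − t(v))`. -/
theorem tree_optimal_target_vector_cost {V : Type*} [Fintype V] [DecidableEq V]
    (T : SimpleGraph V) [DecidableRel T.Adj] (hT : T.IsTree)
    (t : V → ℕ) (ht : ∀ v, 1 ≤ t v) :
    IsLeast {c : ℤ | ∃ s : V → ℕ, isTargetVec T t s ∧ c = ∑ v : V, (s v : ℤ)}
      ((∑ v : V, (t v : ℤ)) - ((Fintype.card V : ℤ) - 1)) ∧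
    (∑ v : V, (t v : ℤ)) - ((Fintype.card V : ℤ) - 1) =
      (Fintype.card V : ℤ) - 1 - ∑ v : V, ((T.degree v : ℤ) - (t v : ℤ)) := by
  obtain ⟨r⟩ := hT.connected.nonempty
  have hedges : (#T.edgeFinset : ℤ) = Fintype.card V - 1 := by
    have := hT.card_edgeFinset
    omega
  refine ⟨⟨⟨rootedIncentive t r, isTargetVec_rootedIncentive hT.connected t r,
    (sum_rootedIncentive ht r).symm⟩, ?_⟩, ?_⟩
  · rintro _ ⟨s, hs, rfl⟩
    have := hs.sum_le_sum_add_card_edgeFinset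
    zify at this
    linarith
  · have := T.sum_degrees_eq_twice_card_edges
    zify at this
    rw [sum_sub_distrib]
    linarith
end

section
/- Let K_n be the complete graph on n ≥ 3 vertices v_1,…,v_n with thresholds t(v_1) = … = t(v_{n−2}) = 1 and t(v_{n−1}) = t(v_n) = n−1. Then the minimum cost Σ_{v∈V} s(v) over all target vectors s for K_n equals 2, independent of n; in particular the vector with s(v_1) = s(v_n) = 1 and s(v_i) = 0 for 2 ≤ i ≤ n−1 is an optimal target vector. -/
lemma activeVec_mono_s5 {V : Type*} [Fintype V] [DecidableEq V] (G : SimpleGraph V)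
    [DecidableRel G.Adj] (t s : V → ℕ) (ℓ : ℕ) :
    activeVec G t s ℓ ⊆ activeVec G t s (ℓ + 1) := by
  simp only [activeVec]; exact Finset.subset_union_left

lemma mem_activeVec_succ_s5 {V : Type*} [Fintype V] [DecidableEq V] (G : SimpleGraph V)
    [DecidableRel G.Adj] (t s : V → ℕ) (ℓ : ℕ) (u : V)
    (h : t u - s u ≤ (G.neighborFinset u ∩ activeVec G t s ℓ).card) :
    u ∈ activeVec G t s (ℓ + 1) := by
  simp only [activeVec]
  exact Finset.mem_union_right _ (Finset.mem_filter.2 ⟨Finset.mem_univ _, h⟩)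

lemma card_filter_fin_lt (n k : ℕ) (hk : k ≤ n) :
    (Finset.univ.filter fun i : Fin n => (i:ℕ) < k).card = k := by
  rw [← Finset.card_image_of_injective _ Fin.val_injective]
  have : Finset.image Fin.val (Finset.univ.filter fun i : Fin n => (i:ℕ) < k)
      = Finset.range k := by
    ext m
    simp only [Finset.mem_image, Finset.mem_filter, Finset.mem_univ, true_and, Finset.mem_range]
    constructor
    · rintro ⟨i, hi, rfl⟩; exact hi
    · intro hm; exact ⟨⟨m, lt_of_lt_of_le hm hk⟩, hm, rfl⟩
  rw [this, Finset.card_range]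

/-- On the complete graph `K_n` (`n ≥ 3`) with thresholds
`t(v_1) = ⋯ = t(v_{n−2}) = 1`, `t(v_{n−1}) = t(v_n) = n−1`, the minimum cost of a target
vector is `2` (independent of `n`); in particular the vector assigning incentive `1` to
`v_1` and `v_n` and `0` elsewhere is an optimal target vector. -/
theorem complete_graph_min_target_vector_cost (n : ℕ) (hn : 3 ≤ n) (t : Fin n → ℕ)
    (ht : ∀ i : Fin n, t i = if (i : ℕ) < n - 2 then 1 else n - 1) :
    IsLeast {k : ℕ | ∃ s : Fin n → ℕ,
        isTargetVec (⊤ : SimpleGraph (Fin n)) t s ∧ ∑ v : Fin n, s v = k} 2 ∧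
    isTargetVec (⊤ : SimpleGraph (Fin n)) t
      (fun i => if (i : ℕ) = 0 ∨ (i : ℕ) = n - 1 then 1 else 0) := by
  set G := (⊤ : SimpleGraph (Fin n)) with hG
  set s₀ : Fin n → ℕ := fun i => if (i : ℕ) = 0 ∨ (i : ℕ) = n - 1 then 1 else 0 with hs₀
  set L : Finset (Fin n) := Finset.univ.filter fun i : Fin n => (i:ℕ) < n - 2 with hL
  have hcardL : L.card = n - 2 := card_filter_fin_lt n (n - 2) (by omega)
  have ha : n - 2 < n := by omega
  have hb : n - 1 < n := by omega
  set a : Fin n := ⟨n - 2, ha⟩ with hadef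
  set b : Fin n := ⟨n - 1, hb⟩ with hbdef
  have hval_a : (a : ℕ) = n - 2 := rfl
  have hval_b : (b : ℕ) = n - 1 := rfl
  have hta : t a = n - 1 := by rw [ht a, hval_a]; simp
  have htb : t b = n - 1 := by rw [ht b, hval_b]; rw [if_neg (by omega)]
  have hnbr : ∀ u v : Fin n, v ∈ G.neighborFinset u ↔ u ≠ v := by
    intro u v
    rw [SimpleGraph.mem_neighborFinset, hG, SimpleGraph.top_adj]
  have hs₀b : s₀ b = 1 := by rw [hs₀]; simp [hval_b]
  have hs₀a : s₀ a = 0 := by rw [hs₀]; simp only [hval_a]; rw [if_neg (by omega)]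
  have hsplit : ∀ i : Fin n, (i : ℕ) < n - 2 ∨ i = a ∨ i = b := by
    intro i
    have := i.isLt
    rcases Nat.lt_or_ge (i : ℕ) (n - 2) with h | h
    · exact Or.inl h
    · rcases Nat.lt_or_ge (i : ℕ) (n - 1) with h2 | h2
      · exact Or.inr (Or.inl (Fin.ext (by omega)))
      · exact Or.inr (Or.inr (Fin.ext (by omega)))
  -- the concrete target vector works
  have htarget : isTargetVec G t s₀ := by
    have z0 : (0 : ℕ) < n := by omega
    -- step 0 : vertex 0 is active
    have h0 : (⟨0, z0⟩ : Fin n) ∈ activeVec G t s₀ 0 := by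
      simp only [activeVec, Finset.mem_filter, Finset.mem_univ, true_and]
      rw [ht ⟨0, z0⟩, if_pos (by simpa using (by omega : (0:ℕ) < n - 2))]
      rw [hs₀]; simp
    -- step 1 : all light vertices are active
    have h1 : L ⊆ activeVec G t s₀ 1 := by
      intro u hu
      rw [hL, Finset.mem_filter] at hu
      by_cases hu0 : u = (⟨0, z0⟩ : Fin n)
      · exact activeVec_mono_s5 G t s₀ 0 (hu0 ▸ h0)
      · apply mem_activeVec_succ_s5
        have hle : 1 ≤ (G.neighborFinset u ∩ activeVec G t s₀ 0).card := by
          refine Finset.card_pos.2 ⟨⟨0, z0⟩, Finset.mem_inter.2 ⟨?_, h0⟩⟩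
          exact (hnbr u _).2 fun h => hu0 h
        calc t u - s₀ u ≤ t u := Nat.sub_le _ _
          _ = 1 := by rw [ht u, if_pos hu.2]
          _ ≤ _ := hle
    -- step 2 : b becomes active
    have h2 : insert b L ⊆ activeVec G t s₀ 2 := by
      intro u hu
      rcases Finset.mem_insert.1 hu with rfl | hu
      · apply mem_activeVec_succ_s5
        have hsub : L ⊆ G.neighborFinset b ∩ activeVec G t s₀ 1 := by
          intro v hv
          refine Finset.mem_inter.2 ⟨(hnbr b v).2 ?_, h1 hv⟩
          rintro rfl
          rw [hL, Finset.mem_filter] at hv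
          omega
        have := Finset.card_le_card hsub
        rw [hcardL] at this
        rw [htb, hs₀b]
        omega
      · exact activeVec_mono_s5 G t s₀ 1 (h1 hu)
    -- step 3 : everything is active
    refine ⟨3, Finset.eq_univ_iff_forall.2 fun u => ?_⟩
    rcases hsplit u with hu | rfl | rfl
    · exact activeVec_mono_s5 G t s₀ 2 (h2 (Finset.mem_insert_of_mem (by
        rw [hL, Finset.mem_filter]; exact ⟨Finset.mem_univ _, hu⟩)))
    · -- u = a
      apply mem_activeVec_succ_s5
      have hsub : insert b L ⊆ G.neighborFinset a ∩ activeVec G t s₀ 2 := by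
        intro v hv
        refine Finset.mem_inter.2 ⟨(hnbr a v).2 ?_, h2 hv⟩
        rintro rfl
        rcases Finset.mem_insert.1 hv with h | h
        · exact absurd (congrArg Fin.val h) (by simp [hval_a, hval_b]; omega)
        · rw [hL, Finset.mem_filter] at h; omega
      have hcard : (insert b L).card = n - 1 := by
        rw [Finset.card_insert_of_notMem (by rw [hL, Finset.mem_filter]; simp [hval_b]; omega),
          hcardL]
        omega
      have := Finset.card_le_card hsub
      rw [hcard] at this
      rw [hta, hs₀a]
      omega
    · exact activeVec_mono_s5 G t s₀ 2 (h2 (Finset.mem_insert_self _ _))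
  -- lower bound : any target vector has cost ≥ 2
  have hlower : ∀ s : Fin n → ℕ, isTargetVec G t s → 2 ≤ ∑ v : Fin n, s v := by
    intro s hs
    by_contra hlt
    push_neg at hlt
    have hsum : ∑ v : Fin n, s v ≤ 1 := by omega
    have hab : s a + s b ≤ 1 := by
      have : s a + s b = ∑ v ∈ ({a, b} : Finset (Fin n)), s v := by
        rw [Finset.sum_pair]
        intro h
        exact absurd (congrArg Fin.val h) (by simp [hval_a, hval_b]; omega)
      rw [this] at *
      exact le_trans (Finset.sum_le_sum_of_subset (Finset.subset_univ _)) hsum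
    by_cases hheavy : s a = 0 ∧ s b = 0
    · -- both heavy vertices get no incentive : they never activate
      have key : ∀ ℓ, a ∉ activeVec G t s ℓ ∧ b ∉ activeVec G t s ℓ := by
        intro ℓ
        induction ℓ with
        | zero =>
          constructor <;>
          · simp only [activeVec, Finset.mem_filter, Finset.mem_univ, true_and]
            first
              | (rw [hta, hheavy.1]; omega)
              | (rw [htb, hheavy.2]; omega)
        | succ ℓ ih =>
          have hbound : ∀ u : Fin n, u ≠ a → u ≠ b →
              (G.neighborFinset u ∩ activeVec G t s ℓ).card ≤ n - 2 → True := fun _ _ _ _ => trivial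
          have hcardub : ∀ u : Fin n,
              (G.neighborFinset u ∩ activeVec G t s ℓ).card ≤ n - 2 := by
            intro u
            have hsub : G.neighborFinset u ∩ activeVec G t s ℓ ⊆
                (Finset.univ.erase a).erase b := by
              intro v hv
              have hv' := (Finset.mem_inter.1 hv).2
              refine Finset.mem_erase.2 ⟨?_, Finset.mem_erase.2 ⟨?_, Finset.mem_univ _⟩⟩
              · rintro rfl; exact ih.2 hv'
              · rintro rfl; exact ih.1 hv'
            have := Finset.card_le_card hsub
            rw [Finset.card_erase_of_mem (Finset.mem_erase.2
              ⟨fun h => absurd (congrArg Fin.val h) (by simp [hval_a, hval_b]; omega),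
                Finset.mem_univ _⟩),
              Finset.card_erase_of_mem (Finset.mem_univ _), Finset.card_univ,
              Fintype.card_fin] at this
            omega
          constructor <;>
          · simp only [activeVec, Finset.mem_union, Finset.mem_filter, Finset.mem_univ, true_and]
            push_neg
            first
              | exact ⟨ih.1, by rw [hta, hheavy.1]; have := hcardub a; omega⟩
              | exact ⟨ih.2, by rw [htb, hheavy.2]; have := hcardub b; omega⟩
      obtain ⟨ℓ, hℓ⟩ := hs
      exact (key ℓ).1 (hℓ ▸ Finset.mem_univ a)
    · -- some heavy vertex gets incentive 1, everything else gets 0 : nothing ever activates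
      have hall : ∀ i : Fin n, s i < t i := by
        intro i
        have hsi : s i ≤ 1 := le_trans (Finset.single_le_sum (f := s)
          (fun _ _ => Nat.zero_le _) (Finset.mem_univ i)) hsum
        rcases hsplit i with h | rfl | rfl
        · -- light vertex : t i = 1, need s i = 0
          rw [ht i, if_pos h]
          by_contra hc
          push_neg at hc
          have hi1 : 1 ≤ s i := by omega
          have hia : i ≠ a := by rintro rfl; rw [hval_a] at h; omega
          have hib : i ≠ b := by rintro rfl; rw [hval_b] at h; omega
          have hne : a ≠ b := by
            intro hh
            have := congrArg Fin.val hh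
            rw [hval_a, hval_b] at this
            omega
          have hii : i ∉ ({a, b} : Finset (Fin n)) := by
            simp only [Finset.mem_insert, Finset.mem_singleton]
            push_neg
            exact ⟨hia, hib⟩
          have heq : ∑ v ∈ (insert i {a, b} : Finset (Fin n)), s v = s i + (s a + s b) := by
            rw [Finset.sum_insert hii, Finset.sum_pair hne]
          have hle : ∑ v ∈ (insert i {a, b} : Finset (Fin n)), s v ≤ ∑ v : Fin n, s v :=
            Finset.sum_le_sum_of_subset (Finset.subset_univ _)
          rw [heq] at hle
          exact hheavy ⟨by omega, by omega⟩
        · rw [hta]; omega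
        · rw [htb]; omega
      have key : ∀ ℓ, activeVec G t s ℓ = ∅ := by
        intro ℓ
        induction ℓ with
        | zero =>
          simp only [activeVec]
          rw [Finset.filter_eq_empty_iff]
          intro i _
          exact Nat.not_le.2 (hall i)
        | succ ℓ ih =>
          simp only [activeVec, ih]
          rw [Finset.empty_union, Finset.filter_eq_empty_iff]
          intro i _
          rw [Finset.inter_empty, Finset.card_empty]
          have := hall i
          omega
      obtain ⟨ℓ, hℓ⟩ := hs
      rw [key ℓ] at hℓ
      have : a ∈ (∅ : Finset (Fin n)) := hℓ ▸ Finset.mem_univ a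
      simp at this
  refine ⟨⟨⟨s₀, htarget, ?_⟩, fun k hk => ?_⟩, htarget⟩
  · -- cost of s₀ is 2
    have z0 : (0 : ℕ) < n := by omega
    have hcb : (⟨0, z0⟩ : Fin n) ≠ b := by
      intro hh
      have := congrArg Fin.val hh
      rw [hval_b] at this
      simp at this
      omega
    have hzero : ∀ i ∈ Finset.univ, i ∉ ({⟨0, z0⟩, b} : Finset (Fin n)) → s₀ i = 0 := by
      intro i _ hi
      simp only [Finset.mem_insert, Finset.mem_singleton] at hi
      push_neg at hi
      show (if (i : ℕ) = 0 ∨ (i : ℕ) = n - 1 then 1 else 0) = 0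
      rw [if_neg]
      push_neg
      constructor
      · intro h; exact hi.1 (Fin.ext h)
      · intro h; exact hi.2 (Fin.ext h)
    have hsum2 : ∑ v ∈ ({⟨0, z0⟩, b} : Finset (Fin n)), s₀ v = ∑ v : Fin n, s₀ v :=
      Finset.sum_subset (Finset.subset_univ _) hzero
    rw [← hsum2, Finset.sum_pair hcb, hs₀b]
    show (if ((⟨0, z0⟩ : Fin n) : ℕ) = 0 ∨ ((⟨0, z0⟩ : Fin n) : ℕ) = n - 1 then 1 else 0) + 1 = 2
    rw [if_pos (Or.inl rfl)]
  · obtain ⟨s, hst, hsum⟩ := hk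
    rw [← hsum]
    exact hlower s hst
end
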